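/- Uniform minorization (Doeblin's condition) implies uniform geometric ergodicity: if there exist ε > 0 and a probability measure ν with τ(A | x) ≥ ε ν(A) for all measurable A and all x ∈ X, then τ has a unique invariant probability measure π and ‖τ^N ∘ δ_x − π‖_TV ≤ (1 − ε)^N for all x ∈ X and N ≥ 0. -/

import Mathlib

open MeasureTheory ProbabilityTheory

/-- The `N`-step distribution of a Markov kernel `τ` from an initial distribution `ρ`. -/
noncomputable def stepN {X : Type*} [MeasurableSpace X] (τ : Kernel X X) (ρ : Measure X) :
    ℕ → Measure X
  | 0 => ρ
  | N + 1 => (stepN τ ρ N).bind (fun x => τ x)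

/-- The total variation distance between two measures. -/
noncomputable def tvDist {X : Type*} [MeasurableSpace X] (μ ν : Measure X) : ℝ :=
  ⨆ s : {s : Set X // MeasurableSet s}, |(μ s).toReal - (ν s).toReal|

/-! Doeblin's condition splits `τ x = ε • ν + ρ x` with `ρ` a kernel of constant mass `1 - ε`.
By induction, the `N`-step laws from any two initial probability measures share a common part and
differ only in their images under `ρ^N`, each of mass `(1 - ε)^N`; this is the total variation
bound, and letting `N → ∞` between two invariant laws gives uniqueness. The invariant law is the
series `π = ∑ₙ ρⁿ(ε • ν)`, which satisfies `π = ε • ν + ρ ∘ₘ π` and hence `τ ∘ₘ π = π`. -/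

open ENNReal Set

lemma ENNReal.abs_toReal_add_sub_add_le {a x y b : ℝ≥0∞} (ha : a ≠ ⊤) (hb : b ≠ ⊤)
    (hx : x ≤ b) (hy : y ≤ b) : |(a + x).toReal - (a + y).toReal| ≤ b.toReal := by
  rw [toReal_add ha (ne_top_of_le_ne_top hb hx), toReal_add ha (ne_top_of_le_ne_top hb hy),
    add_sub_add_left_eq_sub]
  exact abs_sub_le_of_nonneg_of_le toReal_nonneg (toReal_mono hb hx) toReal_nonneg
    (toReal_mono hb hy)

lemma MeasureTheory.Measure.ext_of_abs_toReal_sub_le_pow {X : Type*} [MeasurableSpace X]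
    {μ μ' : Measure X} [IsFiniteMeasure μ] [IsFiniteMeasure μ'] {r : ℝ} (hr₀ : 0 ≤ r)
    (hr₁ : r < 1) (h : ∀ N : ℕ, ∀ s, MeasurableSet s → |(μ s).toReal - (μ' s).toReal| ≤ r ^ N) :
    μ = μ' := by
  ext s hs
  have hle : |(μ s).toReal - (μ' s).toReal| ≤ 0 :=
    ge_of_tendsto (tendsto_pow_atTop_nhds_zero_of_lt_one hr₀ hr₁) (.of_forall fun N => h N s hs)
  rwa [← toReal_eq_toReal_iff' (measure_ne_top μ s) (measure_ne_top μ' s), ← sub_eq_zero,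
    ← abs_nonpos_iff]

lemma tvDist_le {X : Type*} [MeasurableSpace X] {μ μ' : Measure X} {r : ℝ}
    (h : ∀ s, MeasurableSet s → |(μ s).toReal - (μ' s).toReal| ≤ r) : tvDist μ μ' ≤ r :=
  have : Nonempty {s : Set X // MeasurableSet s} := ⟨⟨∅, .empty⟩⟩
  ciSup_le fun s => h s.1 s.2

namespace ProbabilityTheory.Kernel

variable {X Y : Type*} [MeasurableSpace X] [MeasurableSpace Y]
  (κ : Kernel X Y) (μ : Measure Y) [IsFiniteMeasure μ] (h : ∀ x, μ ≤ κ x)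

noncomputable def subConst : Kernel X Y where
  toFun x := κ x - μ
  measurable' := by
    refine Measure.measurable_of_measurable_coe _ fun s hs => ?_
    simp only [Measure.sub_apply hs (h _)]
    exact (κ.measurable_coe hs).sub measurable_const

lemma subConst_apply (x : X) : κ.subConst μ h x = κ x - μ := rfl

lemma const_add_subConst : const X μ + κ.subConst μ h = κ := by
  ext1 x
  rw [add_apply, const_apply, subConst_apply, add_comm, Measure.sub_add_cancel_of_le (h x)]

lemma subConst_apply_univ [IsMarkovKernel κ] (x : X) :
    κ.subConst μ h x univ = 1 - μ univ := by
  rw [subConst_apply, Measure.sub_apply .univ (h x), measure_univ]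

end ProbabilityTheory.Kernel

section stepN

variable {X : Type*} [MeasurableSpace X] {κ : Kernel X X} {μ : Measure X}

lemma stepN_succ (κ : Kernel X X) (μ : Measure X) (N : ℕ) :
    stepN κ μ (N + 1) = κ ∘ₘ stepN κ μ N := rfl

instance isProbabilityMeasure_stepN [IsMarkovKernel κ] [IsProbabilityMeasure μ] {N : ℕ} :
    IsProbabilityMeasure (stepN κ μ N) := by
  induction N with
  | zero => assumption
  | succ N ih => rw [stepN_succ]; infer_instance

lemma stepN_apply_univ {c : ℝ≥0∞} (hκ : ∀ x, κ x univ = c) (N : ℕ) :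
    stepN κ μ N univ = c ^ N * μ univ := by
  induction N with
  | zero => simp [stepN]
  | succ N ih =>
    rw [stepN_succ, Measure.bind_apply .univ κ.aemeasurable]
    simp only [hκ, lintegral_const, ih]
    ring

lemma stepN_eq_self_of_comp_eq (h : κ ∘ₘ μ = μ) (N : ℕ) : stepN κ μ N = μ := by
  induction N with
  | zero => rfl
  | succ N ih => rw [stepN_succ, ih, h]

lemma sum_stepN_apply_univ {c : ℝ≥0∞} (hκ : ∀ x, κ x univ = c) :
    Measure.sum (stepN κ μ) univ = (1 - c)⁻¹ * μ univ := by
  simp_rw [Measure.sum_apply _ .univ, stepN_apply_univ hκ, ENNReal.tsum_mul_right,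
    ENNReal.tsum_geometric]

lemma sum_stepN_eq_add_comp (κ : Kernel X X) (μ : Measure X) :
    Measure.sum (stepN κ μ) = μ + κ ∘ₘ Measure.sum (stepN κ μ) := by
  rw [Measure.bind_sum _ _ κ.aemeasurable]
  ext s hs
  rw [Measure.sum_apply _ hs, Measure.add_apply, Measure.sum_apply _ hs,
    tsum_eq_zero_add' ENNReal.summable]
  rfl

end stepN

section Decomposition

variable {X : Type*} [MeasurableSpace X] {τ ρ : Kernel X X} {ν : Measure X} {c : ℝ≥0∞}

lemma comp_eq_smul_add_comp (hτ : τ = Kernel.const X ν + ρ) (μ : Measure X) :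
    τ ∘ₘ μ = μ univ • ν + ρ ∘ₘ μ := by
  rw [hτ, Measure.add_comp, Measure.const_comp]

lemma exists_stepN_eq_add_stepN (hτ : τ = Kernel.const X ν + ρ) (hρ : ∀ x, ρ x univ = c)
    (N : ℕ) : ∃ m : Measure X, ∀ (μ : Measure X) [IsProbabilityMeasure μ],
      stepN τ μ N = m + stepN ρ μ N := by
  induction N with
  | zero => exact ⟨0, fun μ _ => (zero_add _).symm⟩
  | succ N ih =>
    obtain ⟨m, hm⟩ := ih
    refine ⟨τ ∘ₘ m + c ^ N • ν, fun μ _ => ?_⟩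
    rw [stepN_succ, hm μ, Measure.comp_add, comp_eq_smul_add_comp hτ (stepN ρ μ N),
      stepN_apply_univ hρ, measure_univ, mul_one, ← stepN_succ, add_assoc]

lemma abs_toReal_stepN_sub_le [IsMarkovKernel τ] (hτ : τ = Kernel.const X ν + ρ)
    (hρ : ∀ x, ρ x univ = c) (hc : c ≠ ⊤) (μ₁ μ₂ : Measure X) [IsProbabilityMeasure μ₁]
    [IsProbabilityMeasure μ₂] (N : ℕ) (s : Set X) :
    |(stepN τ μ₁ N s).toReal - (stepN τ μ₂ N s).toReal| ≤ c.toReal ^ N := by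
  obtain ⟨m, hm⟩ := exists_stepN_eq_add_stepN hτ hρ N
  have hρ_le (μ : Measure X) [IsProbabilityMeasure μ] : stepN ρ μ N s ≤ c ^ N := by
    simpa [stepN_apply_univ hρ] using measure_mono (μ := stepN ρ μ N) (subset_univ s)
  have hm_ne_top : m s ≠ ⊤ := by
    refine ne_top_of_le_ne_top (measure_ne_top (stepN τ μ₁ N) s) ?_
    rw [hm μ₁, Measure.add_apply]
    exact le_self_add
  rw [hm μ₁, hm μ₂, Measure.add_apply, Measure.add_apply, ← toReal_pow]
  exact abs_toReal_add_sub_add_le hm_ne_top (pow_ne_top hc) (hρ_le μ₁) (hρ_le μ₂)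

lemma comp_sum_stepN (hτ : τ = Kernel.const X ν + ρ) (h : Measure.sum (stepN ρ ν) univ = 1) :
    τ ∘ₘ Measure.sum (stepN ρ ν) = Measure.sum (stepN ρ ν) := by
  rw [comp_eq_smul_add_comp hτ, h, one_smul, ← sum_stepN_eq_add_comp]

end Decomposition

theorem doeblin_uniform_geometric_ergodicity {X : Type*} [MeasurableSpace X]
    (τ : Kernel X X) [IsMarkovKernel τ]
    (ε : ℝ) (hε : 0 < ε) (ν : Measure X) [IsProbabilityMeasure ν]
    (hminor : ∀ x : X, ∀ A : Set X, MeasurableSet A →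
      ENNReal.ofReal ε * ν A ≤ τ x A) :
    ∃ π : Measure X, IsProbabilityMeasure π ∧ π.bind (fun x => τ x) = π ∧
      (∀ π' : Measure X, IsProbabilityMeasure π' → π'.bind (fun x => τ x) = π' → π' = π) ∧
      ∀ (x : X) (N : ℕ), tvDist (stepN τ (Measure.dirac x) N) π ≤ (1 - ε) ^ N := by
  set e := ENNReal.ofReal ε
  have hle (x : X) : e • ν ≤ τ x := Measure.le_iff.2 fun s hs => by simpa using hminor x s hs
  have hε₁ : ε ≤ 1 := by
    obtain ⟨x⟩ := nonempty_of_isProbabilityMeasure ν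
    simpa [e] using hminor x univ .univ
  have he : e ≤ 1 := ofReal_le_one.2 hε₁
  have : IsFiniteMeasure (e • ν) := ν.smul_finite ofReal_ne_top
  set ρ := τ.subConst (e • ν) hle
  have hτ : τ = Kernel.const X (e • ν) + ρ := (τ.const_add_subConst _ hle).symm
  have hρ (x : X) : ρ x univ = 1 - e := by simp [ρ, Kernel.subConst_apply_univ]
  have hc : (1 - e).toReal = 1 - ε := by
    rw [toReal_sub_of_le he one_ne_top, toReal_one, toReal_ofReal hε.le]
  have hbound := abs_toReal_stepN_sub_le hτ hρ (sub_ne_top one_ne_top)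
  set π := Measure.sum (stepN ρ (e • ν))
  have hπ : IsProbabilityMeasure π := ⟨by
    rw [sum_stepN_apply_univ hρ, ENNReal.sub_sub_cancel one_ne_top he]
    simp [e, ENNReal.inv_mul_cancel, hε]⟩
  have hπ_inv : τ ∘ₘ π = π := comp_sum_stepN hτ measure_univ
  refine ⟨π, hπ, hπ_inv, fun π' _ hπ' => ?_, fun x N => tvDist_le fun s _ => ?_⟩
  · refine Measure.ext_of_abs_toReal_sub_le_pow (r := 1 - ε) (by linarith) (by linarith)
      fun N s _ => ?_
    simpa [stepN_eq_self_of_comp_eq hπ', stepN_eq_self_of_comp_eq hπ_inv, hc] using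
      hbound π' π N s
  · simpa [stepN_eq_self_of_comp_eq hπ_inv, hc] using hbound (Measure.dirac x) π N s
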